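/- arXiv:1407.1873 — 3 statements merged into one kernel-verified Lean document; each statement's English description precedes it below -/
import Mathlib

section
/- For positive integers k and n, the coefficient of z^n in (C(z)/z)^k equals (k/n)·binomial(k+2n-1, n-1), where C(z) = (1-√(1-4z))/2 is the Catalan generating function. -/
/-!
Lagrange inversion is avoided: `C = 1 + z C²` gives `C^(k+1) = C^k + z C^(k+2)`, so the
coefficients of the powers of `C` obey the ballot-number recurrence, and the closed form
`(k+1) (2n+k)! / (n! (n+k+1)!)` obeys the same recurrence with the same boundary values
(`1` for `n = 0`, the Catalan numbers for `k = 0`).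
-/

open PowerSeries

/-- The power series `C(z)/z = Σ_{n≥0} Catalan(n) z^n`, where `C(z) = (1-√(1-4z))/2` is the
Catalan generating function of plane rooted trees. -/
noncomputable def catalanSeries : PowerSeries ℚ := PowerSeries.mk fun n => (catalan n : ℚ)

open Nat

theorem catalanSeries_eq_map :
    _root_.catalanSeries = map (Nat.castRingHom ℚ) PowerSeries.catalanSeries := by
  ext n
  simp [_root_.catalanSeries]

theorem catalanSeries_pow_succ (k : ℕ) :
    _root_.catalanSeries ^ (k + 1) =
      _root_.catalanSeries ^ k + X * _root_.catalanSeries ^ (k + 2) := by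
  have h := congrArg (map (Nat.castRingHom ℚ)) PowerSeries.catalanSeries_sq_mul_X_add_one
  simp only [map_add, map_mul, map_pow, map_X, map_one, ← catalanSeries_eq_map] at h
  linear_combination (_root_.catalanSeries ^ k) * h.symm

theorem coeff_succ_catalanSeries_pow_succ (n k : ℕ) :
    coeff (n + 1) (_root_.catalanSeries ^ (k + 1)) =
      coeff (n + 1) (_root_.catalanSeries ^ k) + coeff n (_root_.catalanSeries ^ (k + 2)) := by
  rw [catalanSeries_pow_succ, map_add, coeff_succ_X_mul]

noncomputable def ballot (n k : ℕ) : ℚ := (k + 1) * (2 * n + k)! / (n ! * (n + k + 1)!)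

theorem ballot_zero_left (k : ℕ) : ballot 0 k = 1 := by
  rw [ballot, factorial_succ]
  push_cast
  field_simp
  ring

theorem ballot_zero_right (n : ℕ) : ballot n 0 = catalan n := by
  rw [catalan_eq_centralBinom_div, Nat.cast_div (n.succ_dvd_centralBinom) (by positivity),
    centralBinom, Nat.cast_choose ℚ (by omega), show 2 * n - n = n by omega, ballot,
    factorial_succ]
  push_cast
  field_simp
  ring_nf

theorem ballot_succ_succ (n k : ℕ) :
    ballot (n + 1) (k + 1) = ballot (n + 1) k + ballot n (k + 2) := by
  simp only [ballot, show 2 * (n + 1) + (k + 1) = 2 * n + k + 3 by ring,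
    show 2 * (n + 1) + k = 2 * n + k + 2 by ring, show 2 * n + (k + 2) = 2 * n + k + 2 by ring,
    show n + 1 + (k + 1) + 1 = n + k + 3 by ring, show n + 1 + k + 1 = n + k + 2 by ring,
    show n + (k + 2) + 1 = n + k + 3 by ring, factorial_succ]
  push_cast
  field_simp
  ring

theorem ballot_succ_left (n k : ℕ) :
    ballot (n + 1) k = (k + 1) / (n + 1) * (2 * n + k + 2).choose n := by
  rw [ballot, Nat.cast_choose ℚ (by omega), show 2 * n + k + 2 - n = n + k + 2 by omega,
    show 2 * (n + 1) + k = 2 * n + k + 2 by ring, show n + 1 + k + 1 = n + k + 2 by ring,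
    factorial_succ n]
  push_cast
  field_simp

theorem coeff_catalanSeries_pow_succ (n k : ℕ) :
    coeff n (_root_.catalanSeries ^ (k + 1)) = ballot n k := by
  induction n generalizing k with
  | zero => simp [ballot_zero_left, _root_.catalanSeries]
  | succ n ihn =>
    induction k with
    | zero => simp [ballot_zero_right, _root_.catalanSeries]
    | succ k ihk => rw [coeff_succ_catalanSeries_pow_succ, ihk, ihn, ballot_succ_succ]

/-- For positive integers `k` and `n`, the coefficient of `z^n` in `(C(z)/z)^k` equals
`(k/n)·binomial(k+2n-1, n-1)`. -/
theorem coeff_catalan_pow (k n : ℕ) (hk : 1 ≤ k) (hn : 1 ≤ n) :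
    PowerSeries.coeff n (_root_.catalanSeries ^ k) =
      (k : ℚ) / n * ((k + 2 * n - 1).choose (n - 1) : ℚ) := by
  obtain ⟨k, rfl⟩ := Nat.exists_eq_add_of_le' hk
  obtain ⟨n, rfl⟩ := Nat.exists_eq_add_of_le' hn
  rw [coeff_catalanSeries_pow_succ, ballot_succ_left,
    show k + 1 + 2 * (n + 1) - 1 = 2 * n + k + 2 by omega, Nat.add_sub_cancel]
  push_cast
  ring
end

section
/- For the mean level widths W̄^i_n = (2^i (2n-2i-1)! (n-1)!)/((2n-i-1)!(n-i-1)!) · n!/(2^(n-1) i!), the normalized quantity (2^(n-1) i!/n!)·W̄^i_n lies in the interval [1, 1/(1 - i²/(2n))] whenever i² < 2n. -/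
/-- The mean number `W̄^i_n` of nodes at level `n-i-1` of the semantic tree of a uniformly
random plane rooted tree of size `n`. -/
noncomputable def Wbar (n i : ℕ) : ℝ :=
  (2 ^ i * (Nat.factorial (2 * n - 2 * i - 1) : ℝ) * (Nat.factorial (n - 1) : ℝ)) /
      ((Nat.factorial (2 * n - i - 1) : ℝ) * (Nat.factorial (n - i - 1) : ℝ)) *
    ((Nat.factorial n : ℝ) / (2 ^ (n - 1) * (Nat.factorial i : ℝ)))

/-!
The normalized width is the product `∏_{j<i} (2n-j-1)/(2n-2j-1)`, whose factors are at least `1`;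
this gives the lower bound. For the upper bound, the factor `(2n-j-1)/(2n-2j-1)` turns
`2n - (j+1)²` into at most `2n - j²`, so the product times `2n - i²` is nonincreasing in `i`
and therefore at most its value `2n` at `i = 0`.
-/

open Finset

noncomputable def normalizedWidth (n i : ℕ) : ℝ :=
  2 ^ (n - 1) * (Nat.factorial i : ℝ) / (Nat.factorial n : ℝ) * Wbar n i

noncomputable def widthRatio (n j : ℕ) : ℝ :=
  (2 * n - j - 1) / (2 * n - 2 * j - 1)

section

variable {n i j : ℕ}

lemma normalizedWidth_eq (n i : ℕ) :
    normalizedWidth n i = 2 ^ i * ((2 * n - 2 * i - 1).factorial : ℝ) * ((n - 1).factorial : ℝ) /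
      (((2 * n - i - 1).factorial : ℝ) * ((n - i - 1).factorial : ℝ)) := by
  unfold normalizedWidth Wbar
  field_simp

lemma normalizedWidth_zero (n : ℕ) : normalizedWidth n 0 = 1 := by
  rw [normalizedWidth_eq]
  simp only [Nat.mul_zero, Nat.sub_zero, pow_zero, one_mul]
  exact div_self (by positivity)

lemma normalizedWidth_succ (h : i + 1 < n) :
    normalizedWidth n (i + 1) = normalizedWidth n i * widthRatio n i := by
  obtain ⟨k, rfl⟩ : ∃ k, n = i + k + 2 := ⟨n - i - 2, by omega⟩
  have hden : 2 * ((i + k + 2 : ℕ) : ℝ) - 2 * i - 1 = 2 * k + 3 := by push_cast; ring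
  rw [normalizedWidth_eq, normalizedWidth_eq, widthRatio, hden,
    show 2 * (i + k + 2) - 2 * (i + 1) - 1 = 2 * k + 1 by omega,
    show 2 * (i + k + 2) - 2 * i - 1 = 2 * k + 1 + 2 by omega,
    show 2 * (i + k + 2) - (i + 1) - 1 = i + 2 * k + 2 by omega,
    show 2 * (i + k + 2) - i - 1 = i + 2 * k + 2 + 1 by omega,
    show i + k + 2 - (i + 1) - 1 = k by omega,
    show i + k + 2 - i - 1 = k + 1 by omega,
    Nat.factorial_succ (i + 2 * k + 2), Nat.factorial_succ k,
    Nat.factorial_succ (2 * k + 1 + 1), Nat.factorial_succ (2 * k + 1)]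
  push_cast
  field_simp
  ring

lemma normalizedWidth_eq_prod (h : i < n) :
    normalizedWidth n i = ∏ j ∈ range i, widthRatio n j := by
  induction i with
  | zero => exact normalizedWidth_zero n
  | succ i ih => rw [normalizedWidth_succ h, ih (by omega), prod_range_succ]

lemma one_le_widthRatio (h : j < n) : 1 ≤ widthRatio n j := by
  have : (2 * j + 1 : ℝ) < 2 * n := by exact_mod_cast (by omega : 2 * j + 1 < 2 * n)
  rw [widthRatio, one_le_div (by linarith)]
  linarith

lemma widthRatio_mul_le (h : j < n) :
    widthRatio n j * (2 * n - (j + 1) ^ 2) ≤ 2 * n - j ^ 2 := by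
  have : (2 * j + 2 : ℝ) ≤ 2 * n := by exact_mod_cast (by omega : 2 * j + 2 ≤ 2 * n)
  rw [widthRatio, div_mul_eq_mul_div, div_le_iff₀ (by linarith)]
  nlinarith [pow_nonneg (Nat.cast_nonneg j : (0 : ℝ) ≤ j) 3]

lemma one_le_prod_widthRatio (h : i ≤ n) : 1 ≤ ∏ j ∈ range i, widthRatio n j :=
  one_le_prod fun _ hj => one_le_widthRatio ((mem_range.mp hj).trans_le h)

lemma prod_widthRatio_mul_le (h : i ≤ n) :
    (∏ j ∈ range i, widthRatio n j) * (2 * n - i ^ 2) ≤ 2 * n := by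
  induction i with
  | zero => simp
  | succ i ih =>
    have hprod : 0 ≤ ∏ j ∈ range i, widthRatio n j :=
      zero_le_one.trans (one_le_prod_widthRatio (by omega))
    calc (∏ j ∈ range (i + 1), widthRatio n j) * (2 * n - ((i + 1 : ℕ) : ℝ) ^ 2)
        = (∏ j ∈ range i, widthRatio n j) * (widthRatio n i * (2 * n - (i + 1) ^ 2)) := by
          rw [prod_range_succ]; push_cast; ring
      _ ≤ (∏ j ∈ range i, widthRatio n j) * (2 * n - i ^ 2) :=
          mul_le_mul_of_nonneg_left (widthRatio_mul_le (by omega)) hprod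
      _ ≤ 2 * n := ih (by omega)

end

theorem level_width_bounds_general (n i : ℕ) (hi : i ≤ n - 1)
    (h : (i : ℝ) ^ 2 < 2 * n) :
    1 ≤ 2 ^ (n - 1) * (Nat.factorial i : ℝ) / (Nat.factorial n : ℝ) * Wbar n i ∧
    2 ^ (n - 1) * (Nat.factorial i : ℝ) / (Nat.factorial n : ℝ) * Wbar n i ≤
      1 / (1 - (i : ℝ) ^ 2 / (2 * n)) := by
  have hn : (0 : ℝ) < n := by nlinarith [sq_nonneg (i : ℝ)]
  have hin : i < n := by
    have : 0 < n := by exact_mod_cast hn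
    omega
  have hbound : 1 / (1 - (i : ℝ) ^ 2 / (2 * n)) = 2 * n / (2 * n - i ^ 2) := by
    field_simp [hn.ne']
  show 1 ≤ normalizedWidth n i ∧ normalizedWidth n i ≤ _
  rw [normalizedWidth_eq_prod hin, hbound, le_div_iff₀ (by linarith)]
  exact ⟨one_le_prod_widthRatio hin.le, prod_widthRatio_mul_le hin.le⟩

/-- For `0 ≤ i ≤ n-1` with `i² < 2n`, the normalized mean level width
`(2^(n-1)·i!/n!)·W̄^i_n` lies in `[1, 1/(1 - i²/(2n))]`. -/
theorem level_width_bounds (n i : ℕ) (hn : 1 ≤ n) (hi : i ≤ n - 1)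
    (h : (i : ℝ) ^ 2 < 2 * n) :
    1 ≤ 2 ^ (n - 1) * (Nat.factorial i : ℝ) / (Nat.factorial n : ℝ) * Wbar n i ∧
    2 ^ (n - 1) * (Nat.factorial i : ℝ) / (Nat.factorial n : ℝ) * Wbar n i ≤
      1 / (1 - (i : ℝ) ^ 2 / (2 * n)) :=
  level_width_bounds_general n i hi h
end

section
/- The mean size S̄_n = Σ_{i=0}^{n-1} W̄^i_n of the semantic tree of a uniformly random plane process tree of size n satisfies S̄_n ~ e · n!/2^(n-1) as n → ∞. -/
/-!
Divided by `n!/2^(n-1)`, the `i`-th term of `Sbar n` becomes `r_n(i)/i!`, where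
`r_n(i) = ∏_{k<i} 2(n-1-k)/(2n-i-1-k)` lies in `[0, 2^i]` and tends to `1` for fixed `i`.
Dominated convergence for series (Tannery's theorem), with dominating series `∑ 2^i/i!`, shows
that the normalized sum tends to `∑ 1/i! = e`.
-/

open Filter

/-- The mean size `S̄_n = Σ_{i=0}^{n-1} W̄^i_n` of the semantic tree. -/
noncomputable def Sbar (n : ℕ) : ℝ := ∑ i ∈ Finset.range n, Wbar n i

open Finset Nat Topology

theorem Nat.cast_descFactorial_eq_prod_range {R : Type*} [CommRing R] {m i : ℕ} (h : i ≤ m) :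
    (m.descFactorial i : R) = ∏ k ∈ range i, ((m : R) - k) := by
  rw [Nat.descFactorial_eq_prod_range, Nat.cast_prod]
  exact prod_congr rfl fun k hk => Nat.cast_sub (by grind)

theorem tendsto_mul_natCast_sub_div_mul_natCast_sub {a : ℝ} (ha : a ≠ 0) (b c : ℝ) :
    Tendsto (fun n : ℕ => (a * n - b) / (a * n - c)) atTop (𝓝 1) := by
  have hlim :
      Tendsto (fun n : ℕ => (a - b / n) / (a - c / n)) atTop (𝓝 ((a - 0) / (a - 0))) :=
    ((tendsto_const_div_atTop_nhds_zero_nat b).const_sub a).div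
      ((tendsto_const_div_atTop_nhds_zero_nat c).const_sub a) (by simpa using ha)
  rw [sub_zero, div_self ha] at hlim
  refine hlim.congr' ?_
  filter_upwards [eventually_ne_atTop 0] with n hn
  have hn : (n : ℝ) ≠ 0 := Nat.cast_ne_zero.mpr hn
  rw [← mul_div_mul_right _ _ hn, sub_mul, sub_mul, div_mul_cancel₀ _ hn, div_mul_cancel₀ _ hn,
    mul_comm, mul_comm (n : ℝ)]

/-- The factor `2^i (n-1)!/(n-i-1)! · (2n-2i-1)!/(2n-i-1)!` of `Wbar n i`, as a product of
`i` ratios. -/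
noncomputable def levelRatio (n i : ℕ) : ℝ :=
  ∏ k ∈ range i, (2 * n - 2 * (k + 1)) / (2 * n - (i + k + 1) : ℝ)

theorem Wbar_eq_levelRatio {n i : ℕ} (h : i < n) :
    Wbar n i = levelRatio n i / i ! * (n ! / 2 ^ (n - 1)) := by
  have hnum :
      ∏ k ∈ range i, (2 * n - 2 * (k + 1) : ℝ) = 2 ^ i * ((n - 1).descFactorial i : ℝ) := by
    rw [Nat.cast_descFactorial_eq_prod_range (by omega), pow_eq_prod_const,
      ← prod_mul_distrib]
    refine prod_congr rfl fun k _ => ?_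
    push_cast [Nat.cast_sub (show 1 ≤ n by omega)]
    ring
  have hden :
      ∏ k ∈ range i, (2 * n - (i + k + 1) : ℝ) = ((2 * n - i - 1).descFactorial i : ℝ) := by
    rw [Nat.cast_descFactorial_eq_prod_range (by omega)]
    refine prod_congr rfl fun k _ => ?_
    push_cast [Nat.cast_sub (show i + 1 ≤ 2 * n by omega), Nat.sub_sub]
    ring
  have hfac₁ := Nat.factorial_mul_descFactorial (show i ≤ n - 1 by omega)
  have hfac₂ := Nat.factorial_mul_descFactorial (show i ≤ 2 * n - i - 1 by omega)
  rw [show n - 1 - i = n - i - 1 by omega] at hfac₁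
  rw [show 2 * n - i - 1 - i = 2 * n - 2 * i - 1 by omega] at hfac₂
  have hpos : (0 : ℝ) < (2 * n - i - 1).descFactorial i :=
    Nat.cast_pos.mpr (Nat.descFactorial_pos.mpr (by omega))
  rw [levelRatio, prod_div_distrib, hnum, hden, Wbar, ← hfac₁, ← hfac₂]
  push_cast
  field_simp

theorem levelRatio_factor_mem_Icc {n i k : ℕ} (hi : i < n) (hk : k < i) :
    (2 * n - 2 * (k + 1)) / (2 * n - (i + k + 1) : ℝ) ∈ Set.Icc 0 2 := by
  have hi : (i : ℝ) + 1 ≤ n := by exact_mod_cast hi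
  have hk : (k : ℝ) + 1 ≤ i := by exact_mod_cast hk
  have hden : (0 : ℝ) < 2 * n - (i + k + 1) := by linarith
  exact ⟨div_nonneg (by linarith) hden.le, (div_le_iff₀ hden).mpr (by linarith)⟩

theorem levelRatio_nonneg {n i : ℕ} (h : i < n) : 0 ≤ levelRatio n i :=
  prod_nonneg fun _ hk => (levelRatio_factor_mem_Icc h (mem_range.mp hk)).1

theorem levelRatio_le_two_pow {n i : ℕ} (h : i < n) : levelRatio n i ≤ 2 ^ i := by
  calc levelRatio n i ≤ ∏ _k ∈ range i, (2 : ℝ) :=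
        prod_le_prod (fun _ hk => (levelRatio_factor_mem_Icc h (mem_range.mp hk)).1)
          fun _ hk => (levelRatio_factor_mem_Icc h (mem_range.mp hk)).2
    _ = 2 ^ i := by rw [prod_const, card_range]

theorem tendsto_levelRatio (i : ℕ) : Tendsto (levelRatio · i) atTop (𝓝 1) := by
  have hlim := tendsto_finsetProd (range i) fun k _ =>
    tendsto_mul_natCast_sub_div_mul_natCast_sub two_ne_zero (2 * (k + 1) : ℝ) (i + k + 1)
  rwa [prod_const_one] at hlim

/-- `Wbar n i` divided by `n! / 2^(n-1)`, extended by `0` beyond the range `i < n` of the sum. -/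
noncomputable def scaledWbar (n i : ℕ) : ℝ :=
  if i < n then levelRatio n i / i ! else 0

theorem Sbar_eq_tsum_scaledWbar (n : ℕ) :
    Sbar n = (∑' i, scaledWbar n i) * (n ! / 2 ^ (n - 1)) := by
  rw [tsum_eq_sum (s := range n) (f := scaledWbar n) fun i hi => if_neg (by simpa using hi),
    Sbar, sum_mul]
  exact sum_congr rfl fun i hi => by
    rw [Wbar_eq_levelRatio (mem_range.mp hi), scaledWbar, if_pos (mem_range.mp hi)]

theorem norm_scaledWbar_le (n i : ℕ) : ‖scaledWbar n i‖ ≤ 2 ^ i / i ! := by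
  unfold scaledWbar
  split_ifs with h
  · rw [Real.norm_of_nonneg (by have := levelRatio_nonneg h; positivity)]
    exact div_le_div_of_nonneg_right (levelRatio_le_two_pow h) (Nat.cast_nonneg _)
  · simp only [norm_zero]; positivity

theorem tendsto_scaledWbar (i : ℕ) : Tendsto (scaledWbar · i) atTop (𝓝 (1 / i !)) := by
  refine ((tendsto_levelRatio i).div_const _).congr' ?_
  filter_upwards [eventually_gt_atTop i] with n hn
  rw [scaledWbar, if_pos hn]

theorem tendsto_tsum_scaledWbar :
    Tendsto (fun n => ∑' i, scaledWbar n i) atTop (𝓝 (Real.exp 1)) := by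
  have hexp : Real.exp 1 = ∑' i : ℕ, 1 / (i ! : ℝ) := by
    simp [Real.exp_eq_exp_ℝ, NormedSpace.exp_eq_tsum_div]
  rw [hexp]
  exact tendsto_tsum_of_dominated_convergence (Real.summable_pow_div_factorial 2)
    tendsto_scaledWbar (.of_forall fun n i => norm_scaledWbar_le n i)

/-- `S̄_n ~ e · n!/2^(n-1)` as `n → ∞`. -/
theorem mean_size_asymptotics :
    Tendsto (fun n : ℕ =>
        Sbar n / (Real.exp 1 * (Nat.factorial n : ℝ) / 2 ^ (n - 1)))
      atTop (nhds 1) := by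
  have hlim := tendsto_tsum_scaledWbar.div_const (Real.exp 1)
  rw [div_self (Real.exp_pos 1).ne'] at hlim
  refine hlim.congr fun n => ?_
  rw [Sbar_eq_tsum_scaledWbar]
  field_simp
end
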